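/- arXiv:2212.13616 — 4 statements merged into one kernel-verified Lean document; each statement's English description precedes it below -/
import Mathlib

section
/- For n ≥ 2, the group of polynomial automorphisms of affine n-space over an infinite field acts infinitely transitively on the set of K-points of affine n-space. -/
/-!
Shears `x ↦ x + F(x|_s)`, with `F` polynomial and with zero components in `s`, are polynomial
automorphisms, since they preserve `x|_s`. Given distinct points, a shear of one coordinate `x₀` by a generic
linear form in the others makes their `x₀`-coordinates distinct. Once one coordinate separates
the points, a shear of the remaining coordinates by Lagrange interpolation polynomials in it
moves them anywhere without changing it. Alternating the roles of two coordinates `x₀, x₁`, any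
`m` distinct points can thus be moved to the diagonal points `(sᵢ, …, sᵢ)` for fixed distinct
`sᵢ ∈ K`, and composing one such automorphism with the inverse of another gives transitivity.
-/

open MvPolynomial

section PolynomialAutomorphisms

variable {σ K : Type*}

section CommSemiring

variable [CommSemiring K]

def IsPolynomialMap (f : (σ → K) → σ → K) : Prop :=
  ∃ p : σ → MvPolynomial σ K, ∀ x i, f x i = eval x (p i)

theorem isPolynomialMap_id : IsPolynomialMap (id : (σ → K) → σ → K) :=
  ⟨X, fun _ _ => (eval_X ..).symm⟩

theorem IsPolynomialMap.comp {f g : (σ → K) → σ → K} (hf : IsPolynomialMap f)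
    (hg : IsPolynomialMap g) : IsPolynomialMap (f ∘ g) := by
  obtain ⟨p, hp⟩ := hf
  obtain ⟨q, hq⟩ := hg
  refine ⟨fun i => bind₁ q (p i), fun x i => ?_⟩
  rw [Function.comp_apply, hp, funext (hq x)]
  exact (eval₂Hom_bind₁ _ _ _ _).symm

variable (σ K) in
def polynomialAutomorphisms : Subgroup (Equiv.Perm (σ → K)) where
  carrier := {e | IsPolynomialMap e ∧ IsPolynomialMap e.symm}
  mul_mem' he hf := ⟨he.1.comp hf.1, hf.2.comp he.2⟩
  one_mem' := ⟨isPolynomialMap_id, isPolynomialMap_id⟩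
  inv_mem' he := he.symm

theorem MvPolynomial.eval_aeval_X (x : σ → K) (j : σ) (q : Polynomial K) :
    eval x (Polynomial.aeval (X j) q) = q.eval (x j) := by
  simpa using (Polynomial.aeval_algHom_apply (aeval x) (X j) q).symm

end CommSemiring

section Shear

variable [CommRing K]

theorem comp_val_add_of_forall_mem_eq_zero {s : Set σ} (x y : σ → K) (hy : ∀ k ∈ s, y k = 0) :
    (x + y) ∘ ((↑) : s → σ) = x ∘ (↑) := by
  funext k
  simp [hy k k.2]

noncomputable def shear (s : Set σ) (F : σ → MvPolynomial s K) (hF : ∀ k ∈ s, F k = 0) :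
    Equiv.Perm (σ → K) where
  toFun x := x + fun k => eval (x ∘ (↑)) (F k)
  invFun x := x - fun k => eval (x ∘ (↑)) (F k)
  left_inv x := by
    dsimp only
    rw [comp_val_add_of_forall_mem_eq_zero _ _ fun k hk => by simp [hF k hk],
      add_sub_cancel_right]
  right_inv x := by
    dsimp only
    rw [sub_eq_add_neg, comp_val_add_of_forall_mem_eq_zero _ _ fun k hk => by simp [hF k hk],
      neg_add_cancel_right]

theorem shear_apply (s : Set σ) (F : σ → MvPolynomial s K) (hF : ∀ k ∈ s, F k = 0)
    (x : σ → K) (k : σ) : shear s F hF x k = x k + eval (x ∘ (↑)) (F k) := rfl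

theorem shear_mem_polynomialAutomorphisms (s : Set σ) (F : σ → MvPolynomial s K)
    (hF : ∀ k ∈ s, F k = 0) : shear s F hF ∈ polynomialAutomorphisms σ K :=
  ⟨⟨fun k => X k + rename (↑) (F k), fun x k => by simp [shear_apply, eval_rename]⟩,
    ⟨fun k => X k - rename (↑) (F k), fun x k => by simp [shear, eval_rename]⟩⟩

end Shear

theorem MvPolynomial.exists_forall_eval_ne_zero {R ι : Type*} [CommRing R] [IsDomain R]
    [Infinite R] (s : Finset ι) {p : ι → MvPolynomial σ R} (hp : ∀ i ∈ s, p i ≠ 0) :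
    ∃ x, ∀ i ∈ s, eval x (p i) ≠ 0 := by
  have hprod : ∏ i ∈ s, p i ≠ 0 := Finset.prod_ne_zero_iff.mpr hp
  obtain ⟨x, hx⟩ : ∃ x, eval x (∏ i ∈ s, p i) ≠ 0 := by
    by_contra! h
    exact hprod (MvPolynomial.funext fun x => by simp [h x])
  exact ⟨x, Finset.prod_ne_zero_iff.mp (by rwa [map_prod] at hx)⟩

theorem MvPolynomial.eq_zero_of_C_add_sum_C_mul_X_eq_zero {R τ : Type*} [CommRing R]
    [Fintype τ] [DecidableEq τ] {r : R} {c : τ → R} (h : C r + ∑ k, C (c k) * X k = 0) :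
    r = 0 ∧ c = 0 := by
  have hr : r = 0 := by simpa using congrArg (eval 0) h
  refine ⟨hr, ?_⟩
  ext k
  simpa [hr, Pi.single_apply] using congrArg (eval (Pi.single k 1)) h

section Transitivity

variable [Field K] {ι : Type*} [Fintype ι]

theorem exists_injective_add_eval [Infinite K] [Fintype σ] {a : ι → σ → K}
    (ha : Function.Injective a) (i₀ : σ) :
    ∃ P : MvPolynomial ({i₀}ᶜ : Set σ) K,
      Function.Injective fun i => a i i₀ + eval (a i ∘ (↑)) P := by
  classical
  -- `eval c (D (i, j)) = 0` says exactly that the form with coefficients `c` fails to separate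
  -- `a i` and `a j`.
  let D (ij : ι × ι) : MvPolynomial ({i₀}ᶜ : Set σ) K :=
    C (a ij.1 i₀ - a ij.2 i₀) + ∑ k : ({i₀}ᶜ : Set σ), C (a ij.1 k - a ij.2 k) * X k
  have hD : ∀ ij ∈ (Finset.univ : Finset ι).offDiag, D ij ≠ 0 := by
    rintro ⟨i, j⟩ hij hD
    obtain ⟨h₀, h⟩ := eq_zero_of_C_add_sum_C_mul_X_eq_zero hD
    refine (Finset.mem_offDiag.mp hij).2.2 (ha (_root_.funext fun k => sub_eq_zero.mp ?_))
    by_cases hk : k = i₀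
    · rwa [hk]
    · exact congrFun h ⟨k, hk⟩
  obtain ⟨c, hc⟩ := exists_forall_eval_ne_zero _ hD
  refine ⟨∑ k, C (c k) * X k, fun i j hij => ?_⟩
  by_contra hne
  refine hc (i, j) (Finset.mem_offDiag.mpr ⟨Finset.mem_univ _, Finset.mem_univ _, hne⟩) ?_
  simp only [map_sum, map_mul, eval_C, eval_X, Function.comp_apply, mul_comm (c _)] at hij
  simp only [D, map_add, map_sum, map_mul, eval_C, eval_X, sub_mul, Finset.sum_sub_distrib]
  linear_combination hij

theorem exists_mem_polynomialAutomorphisms_injective_coord [Infinite K] [Fintype σ]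
    {a : ι → σ → K} (ha : Function.Injective a) (i₀ : σ) :
    ∃ e ∈ polynomialAutomorphisms σ K, Function.Injective fun i => e (a i) i₀ := by
  classical
  obtain ⟨P, hP⟩ := exists_injective_add_eval ha i₀
  have hF : ∀ k ∈ ({i₀}ᶜ : Set σ), (Pi.single i₀ P : σ → MvPolynomial _ K) k = 0 :=
    fun k hk => Pi.single_eq_of_ne (M := fun _ => MvPolynomial _ K) hk P
  refine ⟨shear _ _ hF, shear_mem_polynomialAutomorphisms _ _ hF, ?_⟩
  simpa [shear_apply] using hP

theorem exists_mem_polynomialAutomorphisms_apply_eq_of_injective_coord {a b : ι → σ → K}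
    {j : σ} (ha : Function.Injective fun i => a i j) (hab : ∀ i, a i j = b i j) :
    ∃ e ∈ polynomialAutomorphisms σ K, ∀ i, e (a i) = b i := by
  classical
  let q (k : σ) : Polynomial K :=
    Lagrange.interpolate Finset.univ (fun i => a i j) fun i => b i k - a i k
  let F (k : σ) : MvPolynomial ({j} : Set σ) K := Polynomial.aeval (X ⟨j, rfl⟩) (q k)
  have hF : ∀ k ∈ ({j} : Set σ), F k = 0 := by
    rintro k rfl
    simp [F, q, hab]
  refine ⟨shear _ F hF, shear_mem_polynomialAutomorphisms _ F hF, fun i => funext fun k => ?_⟩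
  rw [shear_apply, eval_aeval_X, Function.comp_apply,
    Lagrange.eval_interpolate_at_node _ ha.injOn (Finset.mem_univ i), add_sub_cancel]

theorem exists_mem_polynomialAutomorphisms_apply_eq_const [Infinite K] [Fintype σ]
    {i₀ i₁ : σ} (h : i₀ ≠ i₁) {s : ι → K} (hs : Function.Injective s) {a : ι → σ → K}
    (ha : Function.Injective a) :
    ∃ e ∈ polynomialAutomorphisms σ K, ∀ i, e (a i) = fun _ => s i := by
  classical
  obtain ⟨e₁, he₁, hinj⟩ := exists_mem_polynomialAutomorphisms_injective_coord ha i₀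
  let u (i : ι) : σ → K := Function.update (fun _ => s i) i₀ (e₁ (a i) i₀)
  obtain ⟨e₂, he₂, h₂⟩ :=
    exists_mem_polynomialAutomorphisms_apply_eq_of_injective_coord (b := u) hinj (by simp [u])
  obtain ⟨e₃, he₃, h₃⟩ :=
    exists_mem_polynomialAutomorphisms_apply_eq_of_injective_coord (a := u) (j := i₁)
      (b := fun i _ => s i) (by simpa [u, h.symm] using hs) (by simp [u, h.symm])
  exact ⟨e₃ * e₂ * e₁, mul_mem (mul_mem he₃ he₂) he₁, fun i => by simp [h₂, h₃]⟩

theorem exists_mem_polynomialAutomorphisms_apply_eq [Infinite K] [Fintype σ] {i₀ i₁ : σ}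
    (h : i₀ ≠ i₁) {a b : ι → σ → K} (ha : Function.Injective a) (hb : Function.Injective b) :
    ∃ e ∈ polynomialAutomorphisms σ K, ∀ i, e (a i) = b i := by
  let s : ι ↪ K :=
    (Fintype.equivFin ι).toEmbedding.trans (Fin.valEmbedding.trans (Infinite.natEmbedding K))
  obtain ⟨ea, hea, hea'⟩ := exists_mem_polynomialAutomorphisms_apply_eq_const h s.injective ha
  obtain ⟨eb, heb, heb'⟩ := exists_mem_polynomialAutomorphisms_apply_eq_const h s.injective hb
  refine ⟨eb⁻¹ * ea, mul_mem (inv_mem heb) hea, fun i => ?_⟩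
  rw [Equiv.Perm.mul_apply, hea', ← heb']
  exact eb.symm_apply_apply (b i)

end Transitivity

end PolynomialAutomorphisms

/-- For n ≥ 2 the group of polynomial automorphisms of affine n-space over an
infinite field acts infinitely transitively on K^n. -/
theorem stmt_5 {K : Type*} [Field K] [Infinite K] {n : ℕ} (hn : 2 ≤ n)
    (m : ℕ) (a b : Fin m → (Fin n → K))
    (ha : Function.Injective a) (hb : Function.Injective b) :
    ∃ φ ψ : (Fin n → K) → (Fin n → K),
      (∃ p : Fin n → MvPolynomial (Fin n) K, ∀ x i, φ x i = MvPolynomial.eval x (p i)) ∧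
      (∃ q : Fin n → MvPolynomial (Fin n) K, ∀ x i, ψ x i = MvPolynomial.eval x (q i)) ∧
      φ ∘ ψ = id ∧ ψ ∘ φ = id ∧ ∀ i, φ (a i) = b i := by
  obtain ⟨e, ⟨he, he_symm⟩, hab⟩ := exists_mem_polynomialAutomorphisms_apply_eq
    (i₀ := ⟨0, by omega⟩) (i₁ := ⟨1, by omega⟩) (by simp [Fin.ext_iff]) ha hb
  exact ⟨e, e.symm, he, he_symm, funext e.apply_symm_apply, funext e.symm_apply_apply, hab⟩
end

section
/- Let h: Z → Z be the translation i ↦ i+1 and let f be a permutation of Z that restricts to an infinite cycle on the positive integers N (the cyclic group generated by f acts transitively on N) and fixes all non-positive integers. Then for each n ≥ 0, the subgroup G_n generated by f, h^{-1}fh, ..., h^{-n}fh^n acts (n+1)-transitively on the set of integers greater than -n. -/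
/-- With h the shift i ↦ i+1 and f an infinite cycle on the positive integers fixing
the rest, the group G_n = ⟨f, h⁻¹fh, ..., h⁻ⁿfhⁿ⟩ acts (n+1)-transitively on the
set of integers greater than -n. -/
theorem stmt_6 (h f : Equiv.Perm ℤ)
    (hh : ∀ i : ℤ, h i = i + 1)
    (hfix : ∀ i : ℤ, i ≤ 0 → f i = i)
    (hcyc : ∀ x y : ℤ, 0 < x → 0 < y → ∃ k : ℤ, (f ^ k) x = y)
    (n : ℕ) (a b : Fin (n + 1) → ℤ)
    (ha : Function.Injective a) (hb : Function.Injective b)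
    (haX : ∀ i, -(n : ℤ) < a i) (hbX : ∀ i, -(n : ℤ) < b i) :
    ∃ g ∈ Subgroup.closure
        {σ : Equiv.Perm ℤ | ∃ k : ℕ, k ≤ n ∧ σ = h⁻¹ ^ k * f * h ^ k},
      ∀ i, g (a i) = b i := by
  -- apply formula for powers of h
  have hpow : ∀ (k : ℕ) (i : ℤ), (h ^ k) i = i + k := by
    intro k
    induction k with
    | zero => simp
    | succ k ih =>
      intro i
      rw [pow_succ, Equiv.Perm.mul_apply, ih, hh]
      push_cast; ring
  have hipow : ∀ (k : ℕ) (i : ℤ), (h⁻¹ ^ k) i = i - k := by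
    intro k i
    rw [inv_pow, Equiv.Perm.inv_eq_iff_eq, hpow]
    ring
  -- f^m fixes nonpositive integers
  have ffix : ∀ (m : ℤ) (i : ℤ), i ≤ 0 → (f ^ m) i = i := by
    intro m i hi
    exact Function.IsFixedPt.perm_zpow (hfix i hi) m
  -- f^m preserves positivity
  have fpos : ∀ (m : ℤ) (x : ℤ), 0 < x → 0 < (f ^ m) x := by
    intro m x hx
    by_contra hc
    push_neg at hc
    have h1 : (f ^ (-m)) ((f ^ m) x) = (f ^ m) x := ffix (-m) _ hc
    have h2 : (f ^ (-m)) ((f ^ m) x) = x := by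
      rw [← Equiv.Perm.mul_apply, ← zpow_add, neg_add_cancel, zpow_zero,
        Equiv.Perm.one_apply]
    omega
  -- apply formula for powers of conjugates
  have Fapp : ∀ (k : ℕ) (m : ℤ) (x : ℤ),
      ((h⁻¹ ^ k * f * h ^ k) ^ m) x = (f ^ m) (x + k) - k := by
    intro k m x
    have hconj : h⁻¹ ^ k * f * h ^ k = (MulAut.conj (h⁻¹ ^ k)) f := by
      rw [MulAut.conj_apply, inv_pow, inv_inv]
    have : (h⁻¹ ^ k * f * h ^ k) ^ m = h⁻¹ ^ k * f ^ m * h ^ k := by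
      rw [hconj, ← map_zpow, MulAut.conj_apply, inv_pow, inv_inv]
    rw [this, Equiv.Perm.mul_apply, Equiv.Perm.mul_apply, hpow, hipow]
  -- every element of the closure of the first m+1 conjugates fixes i ≤ -m
  have closure_fix : ∀ (m : ℕ) (g : Equiv.Perm ℤ),
      g ∈ Subgroup.closure {σ : Equiv.Perm ℤ | ∃ k : ℕ, k ≤ m ∧ σ = h⁻¹ ^ k * f * h ^ k} →
      ∀ i : ℤ, i ≤ -(m : ℤ) → g i = i := by
    intro m g hg
    induction hg using Subgroup.closure_induction with
    | mem σ hσ =>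
      obtain ⟨k, hk, rfl⟩ := hσ
      intro i hi
      have h1 := Fapp k 1 i
      rw [zpow_one, zpow_one] at h1
      have h2 : i + (k : ℤ) ≤ 0 := by
        have : (k : ℤ) ≤ m := by exact_mod_cast hk
        omega
      rw [h1, hfix _ h2]
      ring
    | one => intro i _; rfl
    | mul x y hx hy px py =>
      intro i hi
      rw [Equiv.Perm.mul_apply, py i hi, px i hi]
    | inv x hx px =>
      intro i hi
      rw [Equiv.Perm.inv_eq_iff_eq, px i hi]
  -- main induction
  induction n with
  | zero =>
    obtain ⟨m, hm⟩ := hcyc (a 0) (b 0) (by simpa using haX 0) (by simpa using hbX 0)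
    have hfmem : f ∈ {σ : Equiv.Perm ℤ | ∃ k : ℕ, k ≤ 0 ∧ σ = h⁻¹ ^ k * f * h ^ k} :=
      ⟨0, le_refl 0, by simp⟩
    refine ⟨f ^ m, Subgroup.zpow_mem _ (Subgroup.subset_closure hfmem) m, ?_⟩
    intro i
    have : i = 0 := Fin.ext (by omega)
    rw [this]; exact hm
  | succ n ih =>
    set S := {σ : Equiv.Perm ℤ | ∃ k : ℕ, k ≤ n + 1 ∧ σ = h⁻¹ ^ k * f * h ^ k} with hS
    set F : Equiv.Perm ℤ := h⁻¹ ^ (n + 1) * f * h ^ (n + 1) with hF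
    have hFmem : F ∈ S := ⟨n + 1, le_refl _, rfl⟩
    have hFapp : ∀ (m x : ℤ), (F ^ m) x = (f ^ m) (x + (n + 1)) - (n + 1) := by
      intro m x
      have := Fapp (n + 1) m x
      push_cast at this
      exact this
    -- F^m preserves {x : -(n+1) < x}
    have hFpres : ∀ (m x : ℤ), -((n : ℤ) + 1) < x → -((n : ℤ) + 1) < (F ^ m) x := by
      intro m x hx
      rw [hFapp]
      have := fpos m (x + (n + 1)) (by omega)
      omega
    -- move a 0 to -n
    have h1 : ∃ p : ℤ, (F ^ p) (a 0) = -(n : ℤ) := by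
      obtain ⟨p, hp⟩ := hcyc (a 0 + (n + 1)) 1 (by have := haX 0; push_cast at this; omega)
        one_pos
      exact ⟨p, by rw [hFapp, hp]; ring⟩
    have h2 : ∃ q : ℤ, (F ^ q) (b 0) = -(n : ℤ) := by
      obtain ⟨q, hq⟩ := hcyc (b 0 + (n + 1)) 1 (by have := hbX 0; push_cast at this; omega)
        one_pos
      exact ⟨q, by rw [hFapp, hq]; ring⟩
    obtain ⟨p, hp⟩ := h1
    obtain ⟨q, hq⟩ := h2
    set a' : Fin (n + 1) → ℤ := fun i => (F ^ p) (a i.succ) with ha'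
    set b' : Fin (n + 1) → ℤ := fun i => (F ^ q) (b i.succ) with hb'
    have ha'inj : Function.Injective a' := fun i j hij =>
      Fin.succ_injective _ (ha ((F ^ p).injective hij))
    have hb'inj : Function.Injective b' := fun i j hij =>
      Fin.succ_injective _ (hb ((F ^ q).injective hij))
    have ha'X : ∀ i, -(n : ℤ) < a' i := by
      intro i
      have hgt : -((n : ℤ) + 1) < a' i := hFpres p _ (by have := haX i.succ; push_cast at this; omega)
      have hne : a' i ≠ -(n : ℤ) := by
        intro hcontra
        have : a i.succ = a 0 := (F ^ p).injective (by rw [hp]; exact hcontra)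
        exact Fin.succ_ne_zero i (ha this)
      omega
    have hb'X : ∀ i, -(n : ℤ) < b' i := by
      intro i
      have hgt : -((n : ℤ) + 1) < b' i := hFpres q _ (by have := hbX i.succ; push_cast at this; omega)
      have hne : b' i ≠ -(n : ℤ) := by
        intro hcontra
        have : b i.succ = b 0 := (F ^ q).injective (by rw [hq]; exact hcontra)
        exact Fin.succ_ne_zero i (hb this)
      omega
    obtain ⟨g', hg'mem, hg'⟩ := ih a' b' ha'inj hb'inj ha'X hb'X
    have hmono : Subgroup.closure {σ : Equiv.Perm ℤ | ∃ k : ℕ, k ≤ n ∧ σ = h⁻¹ ^ k * f * h ^ k}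
        ≤ Subgroup.closure S := by
      apply Subgroup.closure_mono
      rintro σ ⟨k, hk, rfl⟩
      exact ⟨k, Nat.le_succ_of_le hk, rfl⟩
    refine ⟨F ^ (-q) * (g' * F ^ p), ?_, ?_⟩
    · exact Subgroup.mul_mem _ (Subgroup.zpow_mem _ (Subgroup.subset_closure hFmem) _)
        (Subgroup.mul_mem _ (hmono hg'mem) (Subgroup.zpow_mem _ (Subgroup.subset_closure hFmem) _))
    · have hFinv : ∀ x : ℤ, (F ^ (-q)) ((F ^ q) x) = x := by
        intro x
        rw [← Equiv.Perm.mul_apply, ← zpow_add, neg_add_cancel, zpow_zero, Equiv.Perm.one_apply]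
      intro i
      rcases Fin.eq_zero_or_eq_succ i with hi | ⟨j, rfl⟩
      · subst hi
        rw [Equiv.Perm.mul_apply, Equiv.Perm.mul_apply, hp,
          closure_fix n g' hg'mem (-(n : ℤ)) (le_refl _), ← hq, hFinv]
      · rw [Equiv.Perm.mul_apply, Equiv.Perm.mul_apply]
        have : g' ((F ^ p) (a j.succ)) = b' j := hg' j
        rw [this, hb', hFinv]
end

section
/- Let h: Z → Z be the translation i ↦ i+1 and let f be a permutation of Z restricting to an infinite cycle on the positive integers and fixing all other integers. Then the group generated by f and h acts infinitely transitively on Z. -/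
/-!
Conjugating `f` by `h ^ N` gives an infinite cycle on `(N, ∞)` that fixes every integer `≤ N`.
Using these for `N = 0, 1, …, m - 1` in turn sends any `m` distinct positive integers to
`1, …, m`, and a power of `h` first makes an arbitrary tuple positive. So `⟨f, h⟩` sends every
injective `m`-tuple to `(1, …, m)`, and hence every injective `m`-tuple to every other.
-/

open Equiv Function

lemma addRight_mem_closure (f : Perm ℤ) (n : ℤ) :
    Equiv.addRight n ∈ Subgroup.closure {f, Equiv.addRight 1} := by
  simpa using zpow_mem (Subgroup.subset_closure (by simp) : Equiv.addRight (1 : ℤ) ∈ _) n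

lemma conj_addRight_apply (σ : Perm ℤ) (N x : ℤ) :
    (Equiv.addRight N * σ * (Equiv.addRight N)⁻¹) x = σ (x - N) + N := by
  simp [sub_eq_add_neg]

section
variable {f : Perm ℤ}

lemma exists_mem_closure_apply_eq_add_one (hfix : ∀ i : ℤ, i ≤ 0 → f i = i)
    (hcyc : ∀ x y : ℤ, 0 < x → 0 < y → ∃ k : ℤ, (f ^ k) x = y) {N z : ℤ} (hz : N < z) :
    ∃ c ∈ Subgroup.closure {f, Equiv.addRight 1}, c z = N + 1 ∧ ∀ x ≤ N, c x = x := by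
  obtain ⟨k, hk⟩ := hcyc (z - N) 1 (by omega) one_pos
  refine ⟨Equiv.addRight N * f ^ k * (Equiv.addRight N)⁻¹,
    mul_mem (mul_mem (addRight_mem_closure f N)
      (zpow_mem (Subgroup.subset_closure (by simp)) k)) (inv_mem (addRight_mem_closure f N)),
    ?_, fun x hx => ?_⟩
  · rw [conj_addRight_apply, hk, add_comm]
  · rw [conj_addRight_apply,
      Perm.zpow_apply_eq_self_of_apply_eq_self (hfix _ (by omega)), sub_add_cancel]

lemma exists_mem_closure_apply_eq_succ_of_pos (hfix : ∀ i : ℤ, i ≤ 0 → f i = i)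
    (hcyc : ∀ x y : ℤ, 0 < x → 0 < y → ∃ k : ℤ, (f ^ k) x = y) :
    ∀ {m : ℕ} (a : Fin m → ℤ), Injective a → (∀ i, 0 < a i) →
      ∃ g ∈ Subgroup.closure {f, Equiv.addRight 1}, (∀ i, g (a i) = i + 1) ∧ ∀ x ≤ 0, g x = x
  | 0, _, _, _ => ⟨1, one_mem _, fun i => i.elim0, fun _ _ => rfl⟩
  | m + 1, a, ha, hpos => by
    obtain ⟨g, hg, hga, hgfix⟩ := exists_mem_closure_apply_eq_succ_of_pos hfix hcyc
      (a ∘ Fin.castSucc) (ha.comp (Fin.castSucc_injective m)) (fun i => hpos _)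
    simp only [comp_apply] at hga
    have hm : (m : ℤ) < g (a (Fin.last m)) := by
      by_contra! hle
      by_cases hnonpos : g (a (Fin.last m)) ≤ 0
      · have := g.injective (hgfix _ hnonpos)
        have := hpos (Fin.last m)
        omega
      · have hi : (g (a (Fin.last m)) - 1).toNat < m := by omega
        have hgi : g (a (Fin.castSucc ⟨_, hi⟩)) = g (a (Fin.last m)) := by
          rw [hga]; simp only; omega
        exact (Fin.castSucc_lt_last _).ne (ha (g.injective hgi))
    obtain ⟨c, hc, hcz, hcfix⟩ := exists_mem_closure_apply_eq_add_one hfix hcyc hm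
    refine ⟨c * g, mul_mem hc hg, fun i => ?_, fun x hx => ?_⟩
    · induction i using Fin.lastCases with
      | last => simpa using hcz
      | cast i => simpa [hga] using hcfix (i + 1) (by omega)
    · rw [Perm.mul_apply, hgfix x hx, hcfix x (by omega)]

lemma exists_mem_closure_apply_eq_succ (hfix : ∀ i : ℤ, i ≤ 0 → f i = i)
    (hcyc : ∀ x y : ℤ, 0 < x → 0 < y → ∃ k : ℤ, (f ^ k) x = y) {m : ℕ} (a : Fin m → ℤ)
    (ha : Injective a) : ∃ g ∈ Subgroup.closure {f, Equiv.addRight 1}, ∀ i, g (a i) = i + 1 := by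
  obtain ⟨K, hK⟩ := (Set.finite_range a).bddBelow
  obtain ⟨g, hg, hga, -⟩ := exists_mem_closure_apply_eq_succ_of_pos hfix hcyc
    (fun i => a i + (1 - K)) ((add_left_injective _).comp ha)
    (fun i => by have := hK ⟨i, rfl⟩; omega)
  exact ⟨g * Equiv.addRight (1 - K), mul_mem hg (addRight_mem_closure f _), hga⟩

end

/-- With h the shift i ↦ i+1 and f an infinite cycle on the positive integers fixing
the rest, the group generated by f and h acts infinitely transitively on ℤ. -/
theorem stmt_7 (h f : Equiv.Perm ℤ)
    (hh : ∀ i : ℤ, h i = i + 1)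
    (hfix : ∀ i : ℤ, i ≤ 0 → f i = i)
    (hcyc : ∀ x y : ℤ, 0 < x → 0 < y → ∃ k : ℤ, (f ^ k) x = y) :
    ∀ (m : ℕ) (a b : Fin m → ℤ), Function.Injective a → Function.Injective b →
      ∃ g ∈ Subgroup.closure {f, h}, ∀ i, g (a i) = b i := by
  obtain rfl : h = Equiv.addRight 1 := Equiv.ext hh
  intro m a b ha hb
  obtain ⟨ga, hga, hgaa⟩ := exists_mem_closure_apply_eq_succ hfix hcyc a ha
  obtain ⟨gb, hgb, hgbb⟩ := exists_mem_closure_apply_eq_succ hfix hcyc b hb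
  refine ⟨gb⁻¹ * ga, mul_mem (inv_mem hgb) hga, fun i => ?_⟩
  rw [Perm.mul_apply, hgaa, ← hgbb, Perm.inv_eq_iff_eq]
end

section
/- Let l ≥ 3 be an integer, ω a primitive root of unity of degree l-1 in an algebraically closed field K of characteristic zero, and let G_l be the subgroup of Aut(A^n) generated by the transformations (x_1,...,x_n) ↦ (x_1 + t·x_2^l, x_2,...,x_n) for t ∈ K and all permutations of coordinates. Then every element of G_l maps each pair of points of the form (P, ωP) with P ∈ K^n to a pair of the same form; in particular G_l does not act 2-transitively on A^n \ {0} for n ≥ 2. -/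
/-!
Scaling by `ω` commutes with every coordinate permutation, and with the shear
`x ↦ x + t x₂ˡ e₁` because `ω ^ l = ω` (as `ω ^ (l - 1) = 1`). So `G_l` lies in the
centralizer of the scaling, and `g (ω P) = ω (g P)` for all `g ∈ G_l`. Consequently no
`g ∈ G_l` can send the pair `(e₁, ω e₁)` to `(e₁, e₂)`.
-/

open Function

theorem Equiv.Perm.mem_centralizer_toPerm_iff {G α : Type*} [Group G] [MulAction G α]
    (u : G) (g : Equiv.Perm α) :
    g ∈ Subgroup.centralizer {MulAction.toPerm u} ↔ ∀ x, g (u • x) = u • g x := by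
  rw [Subgroup.mem_centralizer_singleton_iff, Equiv.Perm.ext_iff]
  rfl

theorem update_add_mul_pow_smul {ι R : Type*} [DecidableEq ι] [CommSemiring R]
    {l : ℕ} {c : R} (hc : c ^ l = c) (t : R) (i j : ι) (x : ι → R) :
    update (c • x) i ((c • x) i + t * (c • x) j ^ l) = c • update x i (x i + t * x j ^ l) := by
  rw [← update_smul]
  congr 1
  simp only [Pi.smul_apply, smul_eq_mul, mul_pow, hc]
  ring

theorem not_two_transitive_of_commute_smul {ι K : Type*} [DecidableEq ι] [Semiring K]
    [Nontrivial K] {c : K} (hc0 : c ≠ 0) (hc1 : c ≠ 1) {i j : ι} (hij : i ≠ j)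
    {H : Subgroup (Equiv.Perm (ι → K))} (hH : ∀ g ∈ H, ∀ x, g (c • x) = c • g x) :
    ¬ (∀ P1 P2 Q1 Q2 : ι → K,
        P1 ≠ 0 → P2 ≠ 0 → Q1 ≠ 0 → Q2 ≠ 0 → P1 ≠ P2 → Q1 ≠ Q2 →
        ∃ g ∈ H, g P1 = Q1 ∧ g P2 = Q2) := by
  intro h2t
  have hscale : c • Pi.single i (1 : K) = Pi.single i c := by
    rw [← Pi.single_smul', smul_eq_mul, mul_one]
  obtain ⟨g, hg, hfix, hmove⟩ :=
    h2t (Pi.single i 1) (Pi.single i c) (Pi.single i 1) (Pi.single j 1)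
      (by simp) (by simpa using hc0) (by simp) (by simp)
      (fun h => hc1 (by simpa using (congrFun h i).symm))
      (fun h => by simpa [hij] using congrFun h i)
  rw [← hscale, hH g hg, hfix, hscale] at hmove
  simpa [hij, hc0] using congrFun hmove i

/-- For l ≥ 3 and ω a primitive (l-1)-th root of unity, the group G_l generated by
the shears (x₁,...,xₙ) ↦ (x₁ + t·x₂ˡ, x₂,...,xₙ) and coordinate permutations sends
each pair (P, ωP) to a pair of the same form; in particular it is not 2-transitive
on Aⁿ \ {0} for n ≥ 2. -/
theorem stmt_19 {K : Type*} [Field K]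
    {n : ℕ} (hn : 2 ≤ n) (l : ℕ) (hl : 3 ≤ l) (ω : K)
    (hω : ω ^ (l - 1) = 1) (hωprim : ∀ k : ℕ, 0 < k → k < l - 1 → ω ^ k ≠ 1) :
    let S : Set (Equiv.Perm (Fin n → K)) :=
      {g | (∃ t : K, ∀ x : Fin n → K,
              g x = Function.update x ⟨0, by omega⟩
                (x ⟨0, by omega⟩ + t * (x ⟨1, by omega⟩) ^ l)) ∨
           (∃ π : Equiv.Perm (Fin n), ∀ x : Fin n → K, g x = x ∘ π)}
    (∀ g ∈ Subgroup.closure S, ∀ P : Fin n → K,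
        g (fun i => ω * P i) = fun i => ω * g P i) ∧
    ¬ (∀ P1 P2 Q1 Q2 : Fin n → K,
        P1 ≠ 0 → P2 ≠ 0 → Q1 ≠ 0 → Q2 ≠ 0 → P1 ≠ P2 → Q1 ≠ Q2 →
        ∃ g ∈ Subgroup.closure S, g P1 = Q1 ∧ g P2 = Q2) := by
  intro S
  have hprim : IsPrimitiveRoot ω (l - 1) := .mk_of_lt ω (by omega) hω hωprim
  have hω0 : ω ≠ 0 := hprim.ne_zero (by omega)
  have hωl : ω ^ l = ω := by rw [show l = l - 1 + 1 by omega, pow_succ, hω, one_mul]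
  have hcentral :
      Subgroup.closure S ≤ Subgroup.centralizer {MulAction.toPerm (Units.mk0 ω hω0)} := by
    rw [Subgroup.closure_le]
    rintro g (⟨t, hg⟩ | ⟨π, hg⟩) <;>
      rw [SetLike.mem_coe, Equiv.Perm.mem_centralizer_toPerm_iff] <;>
      intro x <;> simp only [hg, Units.smul_mk0]
    · exact update_add_mul_pow_smul hωl t _ _ x
    · rfl
  have hcomm : ∀ g ∈ Subgroup.closure S, ∀ x, g (ω • x) = ω • g x := fun g hg => by
    simpa only [Equiv.Perm.mem_centralizer_toPerm_iff, Units.smul_mk0] using hcentral hg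
  exact ⟨hcomm, not_two_transitive_of_commute_smul hω0 (hprim.ne_one (by omega))
    (i := ⟨0, by omega⟩) (j := ⟨1, by omega⟩) (by simp [Fin.ext_iff]) hcomm⟩
end
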